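/- arXiv:1407.3004 — 2 statements merged into one kernel-verified Lean document; each statement's English description precedes it below -/
import Mathlib

section
/- Let (x*, y*) be a Nash equilibrium of bimatrix game (R, C) with payoffs in [0,1], let v* = (x*)ᵀ R y*, let δ > 0, let k ≥ 2 ln(1/δ)/δ², and let J_1, …, J_k be i.i.d. with distribution y*, defining Y_j = (1/k)Σ_t 1[J_t = j]. Then for any set I ⊆ supp(x*) with |I| ≤ k, the probability that R_{i•} Y < v* − δ for some i ∈ I is at most k · e^{−2δ²k} < 1/2. -/
open MeasureTheory ProbabilityTheory

/-!
Every pure strategy `i` in the support of `x*` is a best response to `y*`, so its expected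
payoff `R_{i•} y*` equals `v*`. The sampled payoff `R_{i•} Y` is the average of the `k`
independent `[0, 1]`-valued variables `R i (J t)` of mean `v*`, so by Hoeffding's inequality it
falls below `v* - δ` with probability at most `e^{-2δ²k}`; the union bound over the at most `k`
rows of `I` gives `k e^{-2δ²k}`. The hypothesis on `k` says `e^{-δ²k} ≤ δ²`, whence
`k e^{-2δ²k} ≤ δ²k e^{-δ²k} ≤ e⁻¹ < 1/2`.
-/

open Finset Real
open scoped NNReal

lemma mul_exp_neg_two_mul_sq_mul_lt_half {δ k : ℝ} (hδ : 0 < δ) (hk0 : 0 ≤ k)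
    (hk : 2 * log (1 / δ) / δ ^ 2 ≤ k) :
    k * exp (-2 * δ ^ 2 * k) < 1 / 2 := by
  have h_tail : exp (-(δ ^ 2 * k)) ≤ δ ^ 2 := by
    rw [← le_log_iff_exp_le (by positivity), log_pow]
    rw [one_div, log_inv, div_le_iff₀ (by positivity)] at hk
    push_cast
    linarith
  calc k * exp (-2 * δ ^ 2 * k) = k * exp (-(δ ^ 2 * k)) * exp (-(δ ^ 2 * k)) := by
        rw [mul_assoc k (exp _), ← exp_add]; ring_nf
    _ ≤ k * exp (-(δ ^ 2 * k)) * δ ^ 2 := by gcongr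
    _ = δ ^ 2 * k * exp (-(δ ^ 2 * k)) := by ring
    _ ≤ exp (-1) := mul_exp_neg_le_exp_neg_one _
    _ < 1 / 2 := exp_neg_one_lt_half

lemma eq_of_le_of_sum_mul_eq {ι : Type*} [Fintype ι] {x a : ι → ℝ} {v : ℝ}
    (hx0 : ∀ i, 0 ≤ x i) (hx1 : ∑ i, x i = 1) (ha : ∀ i, a i ≤ v) (hv : v = ∑ i, x i * a i)
    {i : ι} (hi : 0 < x i) : a i = v := by
  have h_sum : ∑ i, x i * a i = ∑ i, x i * v := by rw [← sum_mul, hx1, one_mul, hv]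
  refine mul_left_cancel₀ hi.ne' ?_
  exact (sum_eq_sum_iff_of_le fun j _ ↦ mul_le_mul_of_nonneg_left (ha j) (hx0 j)).1 h_sum i
    (mem_univ i)

lemma sum_mul_sum_ite_eq {α ι M : Type*} [Fintype α] [DecidableEq α] [NonAssocSemiring M]
    (s : Finset ι) (f : α → M) (J : ι → α) :
    ∑ a, f a * ∑ t ∈ s, (if J t = a then 1 else 0) = ∑ t ∈ s, f (J t) := by
  simp_rw [mul_sum, mul_ite, mul_one, mul_zero]
  rw [sum_comm]
  simp

section

variable {Ω : Type*} [MeasurableSpace Ω] {μ : Measure Ω}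

lemma integral_comp_eq_sum_mul_of_measure_eq [IsFiniteMeasure μ] {α : Type*} [Fintype α]
    [MeasurableSpace α] [MeasurableSingletonClass α] {J : Ω → α} (hJ : Measurable J)
    {p : α → ℝ} (hp : ∀ a, 0 ≤ p a) (h_law : ∀ a, μ {ω | J ω = a} = ENNReal.ofReal (p a))
    (f : α → ℝ) :
    ∫ ω, f (J ω) ∂μ = ∑ a, f a * p a := by
  rw [← integral_map hJ.aemeasurable (measurable_of_countable f).aestronglyMeasurable,
    integral_fintype .of_finite]
  refine sum_congr rfl fun a _ ↦ ?_
  rw [measureReal_def, Measure.map_apply hJ (measurableSet_singleton a)]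
  simp [Set.preimage, h_law, hp, mul_comm]

lemma measureReal_sum_le_sum_integral_sub_le [IsProbabilityMeasure μ] {ι : Type*}
    {X : ι → Ω → ℝ} (h_indep : iIndepFun X μ) (h_meas : ∀ i, AEMeasurable (X i) μ)
    (h_mem : ∀ i, ∀ᵐ ω ∂μ, X i ω ∈ Set.Icc (0 : ℝ) 1) (s : Finset ι) {ε : ℝ} (hε : 0 ≤ ε) :
    μ.real {ω | ∑ i ∈ s, X i ω ≤ ∑ i ∈ s, μ[X i] - ε} ≤ exp (-2 * ε ^ 2 / #s) := by
  have h_subG : ∀ i ∈ s,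
      HasSubgaussianMGF (fun ω ↦ μ[X i] - X i ω) ((‖(1 : ℝ) - 0‖₊ / 2) ^ 2) μ :=
    fun i _ ↦ (hasSubgaussianMGF_of_mem_Icc (h_meas i) (h_mem i)).neg.congr
      (ae_of_all _ fun ω ↦ by simp)
  have h_indep' : iIndepFun (fun i ω ↦ μ[X i] - X i ω) μ :=
    h_indep.comp (fun i (y : ℝ) ↦ (∫ ω, X i ω ∂μ) - y) fun _ ↦ measurable_const.sub measurable_id
  calc μ.real {ω | ∑ i ∈ s, X i ω ≤ ∑ i ∈ s, μ[X i] - ε}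
      = μ.real {ω | ε ≤ ∑ i ∈ s, (μ[X i] - X i ω)} := by
        simp_rw [sum_sub_distrib, le_sub_comm]
    _ ≤ exp (-ε ^ 2 / (2 * ((∑ i ∈ s, (‖(1 : ℝ) - 0‖₊ / 2) ^ 2 : ℝ≥0) : ℝ))) :=
        HasSubgaussianMGF.measure_sum_ge_le_of_iIndepFun h_indep' h_subG hε
    _ = exp (-2 * ε ^ 2 / #s) := by
        congr 1
        push_cast [sum_const, nsmul_eq_mul]
        norm_num
        ring

lemma measure_sum_comp_le_mul_sub_le [IsProbabilityMeasure μ] {α : Type*} [Fintype α]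
    [MeasurableSpace α] [MeasurableSingletonClass α] {k : ℕ} {J : Fin k → Ω → α}
    (hJ : ∀ t, Measurable (J t)) (h_indep : iIndepFun J μ) {p : α → ℝ} (hp : ∀ a, 0 ≤ p a)
    (h_law : ∀ t a, μ {ω | J t ω = a} = ENNReal.ofReal (p a)) {f : α → ℝ}
    (hf : ∀ a, f a ∈ Set.Icc (0 : ℝ) 1) {δ : ℝ} (hδ : 0 ≤ δ) :
    μ {ω | ∑ t, f (J t ω) ≤ k * (∑ a, f a * p a - δ)} ≤
      ENNReal.ofReal (exp (-2 * δ ^ 2 * k)) := by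
  have hf_meas : Measurable f := measurable_of_countable f
  have h_mean : ∀ t, ∫ ω, f (J t ω) ∂μ = ∑ a, f a * p a := fun t ↦
    integral_comp_eq_sum_mul_of_measure_eq (hJ t) hp (h_law t) f
  have h_hoeffding := measureReal_sum_le_sum_integral_sub_le
    (h_indep.comp (fun _ ↦ f) fun _ ↦ hf_meas) (fun t ↦ (hf_meas.comp (hJ t)).aemeasurable)
    (fun t ↦ ae_of_all _ fun ω ↦ hf _) univ (mul_nonneg k.cast_nonneg hδ)
  rw [← ofReal_measureReal]
  refine ENNReal.ofReal_le_ofReal (le_of_eq_of_le ?_ (h_hoeffding.trans_eq ?_))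
  · simp only [Function.comp_apply, h_mean, sum_const, card_univ, Fintype.card_fin, nsmul_eq_mul,
      mul_sub]
  · have h_div : (k : ℝ) ^ 2 / k = k := by rw [sq, mul_self_div_self]
    rw [card_univ, Fintype.card_fin]
    congr 1
    linear_combination (-2 * δ ^ 2) * h_div

end

theorem union_bound_sampled_payoffs_general {n k : ℕ} (hk : 0 < k)
    {Ω : Type*} [MeasurableSpace Ω] (μ : Measure Ω) [IsProbabilityMeasure μ]
    (R : Matrix (Fin n) (Fin n) ℝ)
    (hR : ∀ i j, R i j ∈ Set.Icc (0:ℝ) 1)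
    (xs ys : Fin n → ℝ)
    (hxs0 : ∀ i, 0 ≤ xs i) (hxs1 : ∑ i, xs i = 1)
    (hys0 : ∀ j, 0 ≤ ys j)
    (vstar : ℝ) (hvstar : vstar = ∑ i, ∑ j, xs i * R i j * ys j)
    (hNashR : ∀ i, (∑ j, R i j * ys j) ≤ vstar)
    (δ : ℝ) (hδ : 0 < δ) (hkδ : 2 * Real.log (1 / δ) / δ ^ 2 ≤ (k : ℝ))
    (J : Fin k → Ω → Fin n) (hJmeas : ∀ t, Measurable (J t))
    (hindep : iIndepFun J μ)
    (hlaw : ∀ t j, μ {ω | J t ω = j} = ENNReal.ofReal (ys j))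
    (Y : Ω → Fin n → ℝ)
    (hY : ∀ ω j, Y ω j = (1 / k : ℝ) * ∑ t, if J t ω = j then 1 else 0)
    (I : Finset (Fin n)) (hI : ∀ i ∈ I, 0 < xs i) (hIcard : I.card ≤ k) :
    μ {ω | ∃ i ∈ I, ∑ j, R i j * Y ω j < vstar - δ} ≤
      ENNReal.ofReal ((k : ℝ) * Real.exp (-2 * δ ^ 2 * k)) ∧
    (k : ℝ) * Real.exp (-2 * δ ^ 2 * k) < 1 / 2 := by
  refine ⟨?_, mul_exp_neg_two_mul_sq_mul_lt_half hδ k.cast_nonneg hkδ⟩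
  have h_payoff : ∀ i ∈ I, ∑ j, R i j * ys j = vstar := fun i hi ↦
    eq_of_le_of_sum_mul_eq hxs0 hxs1 hNashR (by simpa only [mul_sum, mul_assoc] using hvstar)
      (hI i hi)
  have h_row : ∀ i ∈ I, μ {ω | ∑ j, R i j * Y ω j < vstar - δ} ≤
      ENNReal.ofReal (exp (-2 * δ ^ 2 * k)) := by
    intro i hi
    refine (measure_mono fun ω hω ↦ ?_).trans
      (measure_sum_comp_le_mul_sub_le hJmeas hindep hys0 hlaw (hR i) hδ.le)
    have h_empirical : ∑ j, R i j * Y ω j = (k : ℝ)⁻¹ * ∑ t, R i (J t ω) := by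
      simp only [hY, one_div, mul_left_comm (R i _)]
      rw [← mul_sum, sum_mul_sum_ite_eq]
    rw [Set.mem_ofPred_eq, h_empirical, inv_mul_lt_iff₀ (by positivity)] at hω
    rw [Set.mem_ofPred_eq, h_payoff i hi]
    exact hω.le
  calc μ {ω | ∃ i ∈ I, ∑ j, R i j * Y ω j < vstar - δ}
      = μ (⋃ i ∈ I, {ω | ∑ j, R i j * Y ω j < vstar - δ}) := by congr 1; ext; simp
    _ ≤ ∑ i ∈ I, μ {ω | ∑ j, R i j * Y ω j < vstar - δ} := measure_biUnion_finset_le _ _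
    _ ≤ #I • ENNReal.ofReal (exp (-2 * δ ^ 2 * k)) := sum_le_card_nsmul _ _ _ h_row
    _ ≤ k • ENNReal.ofReal (exp (-2 * δ ^ 2 * k)) := by gcongr
    _ = ENNReal.ofReal (k * exp (-2 * δ ^ 2 * k)) := by
        rw [nsmul_eq_mul, ENNReal.ofReal_mul k.cast_nonneg, ENNReal.ofReal_natCast]

/-- union bound over a subset I of supp(x*) of size at most k: the
probability that some i ∈ I has R_{i•}Y < v* − δ is at most k·e^{−2δ²k}, which is
less than 1/2 when k ≥ 2 ln(1/δ)/δ². -/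
theorem union_bound_sampled_payoffs {n k : ℕ} (hn : 0 < n) (hk : 0 < k)
    {Ω : Type*} [MeasurableSpace Ω] (μ : Measure Ω) [IsProbabilityMeasure μ]
    (R C : Matrix (Fin n) (Fin n) ℝ)
    (hR : ∀ i j, R i j ∈ Set.Icc (0:ℝ) 1) (hC : ∀ i j, C i j ∈ Set.Icc (0:ℝ) 1)
    (xs ys : Fin n → ℝ)
    (hxs0 : ∀ i, 0 ≤ xs i) (hxs1 : ∑ i, xs i = 1)
    (hys0 : ∀ j, 0 ≤ ys j) (hys1 : ∑ j, ys j = 1)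
    (vstar : ℝ) (hvstar : vstar = ∑ i, ∑ j, xs i * R i j * ys j)
    (hNashR : ∀ i, (∑ j, R i j * ys j) ≤ vstar)
    (hNashC : ∀ j, (∑ i, xs i * C i j) ≤ ∑ i, ∑ j, xs i * C i j * ys j)
    (δ : ℝ) (hδ : 0 < δ) (hkδ : 2 * Real.log (1 / δ) / δ ^ 2 ≤ (k : ℝ))
    (J : Fin k → Ω → Fin n) (hJmeas : ∀ t, Measurable (J t))
    (hindep : iIndepFun J μ)
    (hlaw : ∀ t j, μ {ω | J t ω = j} = ENNReal.ofReal (ys j))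
    (Y : Ω → Fin n → ℝ)
    (hY : ∀ ω j, Y ω j = (1 / k : ℝ) * ∑ t, if J t ω = j then 1 else 0)
    (I : Finset (Fin n)) (hI : ∀ i ∈ I, 0 < xs i) (hIcard : I.card ≤ k) :
    μ {ω | ∃ i ∈ I, ∑ j, R i j * Y ω j < vstar - δ} ≤
      ENNReal.ofReal ((k : ℝ) * Real.exp (-2 * δ ^ 2 * k)) ∧
    (k : ℝ) * Real.exp (-2 * δ ^ 2 * k) < 1 / 2 :=
  union_bound_sampled_payoffs_general hk μ R hR xs ys hxs0 hxs1 hys0 vstar hvstar hNashR δ hδ hkδ J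
    hJmeas hindep hlaw Y hY I hI hIcard
end

section
/- Let X and Y be random mixed strategies (random probability vectors) such that supp(X) ⊆ S and supp(Y) ⊆ T almost surely for finite sets S, T, and suppose that for every subset I ⊆ S, P(R_{i•}Y < v for some i ∈ I | supp(X) = I) < 1/2, and for every subset J ⊆ T, P(XᵀC_{•j} < u for some j ∈ J | supp(Y) = J) < 1/2 (whenever these events have positive probability). Then P(R_{i•}Y ≥ v for all i ∈ supp(X) and XᵀC_{•j} ≥ u for all j ∈ supp(Y)) > 0; in particular there exist realizations (x, y) that well support (v, u). -/
/-!
The events "the support of `X` is `I`", for `I ⊆ S`, partition the sample space up to a null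
set. Adding the hypotheses over the cells of this partition shows that, with probability less
than `1/2`, some strategy in the support of `X` earns less than `v` against `Y`; symmetrically
for `Y`. By the union bound both failures together have probability less than `1`.
-/

open MeasureTheory

theorem measurableSet_setOf_pos_eq {Ω ι : Type*} [MeasurableSpace Ω] [Countable ι]
    {X : Ω → ι → ℝ} (hX : Measurable X) (I : Set ι) :
    MeasurableSet {ω | {i | 0 < X ω i} = I} := by
  simp only [Set.ext_iff, Set.mem_ofPred_eq, Set.ofPred_forall]
  exact .iInter fun i => (measurableSet_lt measurable_const hX.eval).iff (.const _)

section

variable {Ω ι : Type*} [MeasurableSpace Ω] {μ : Measure Ω} [IsProbabilityMeasure μ]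

theorem measure_lt_of_measure_inter_lt_mul {s : Finset ι} {F : ι → Set Ω}
    (hF : ∀ i ∈ s, MeasurableSet (F i)) (hFd : (s : Set ι).PairwiseDisjoint F)
    (hcover : ∀ᵐ ω ∂μ, ∃ i ∈ s, ω ∈ F i) {A : Set Ω} {c : ENNReal}
    (hA : ∀ i ∈ s, μ (F i) ≠ 0 → μ (F i ∩ A) < c * μ (F i)) :
    μ A < c := by
  classical
  -- Only on the cells of positive measure is the bound `hA` strict.
  set s' := s.filter (fun i => μ (F i) ≠ 0)
  have hcells : ∑ i ∈ s, μ (F i) = 1 := by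
    refine measure_biUnion_finset hFd hF ▸ le_antisymm prob_le_one ?_
    refine measure_univ (μ := μ) ▸ measure_mono_ae ?_
    filter_upwards [hcover] with ω ⟨i, hi, hω⟩ _
    exact Set.mem_biUnion hi hω
  have hs' : s'.Nonempty := by
    obtain ⟨i, hi, hne⟩ := Finset.exists_ne_zero_of_sum_ne_zero (hcells ▸ one_ne_zero)
    exact ⟨i, Finset.mem_filter.2 ⟨hi, hne⟩⟩
  calc μ A ≤ ∑ i ∈ s, μ (F i ∩ A) := by
        refine (measure_mono_ae ?_).trans (measure_biUnion_finset_le s _)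
        filter_upwards [hcover] with ω ⟨i, hi, hω⟩ hA
        exact Set.mem_biUnion hi ⟨hω, hA⟩
    _ = ∑ i ∈ s', μ (F i ∩ A) :=
        (Finset.sum_filter_of_ne fun i _ h =>
          mt (measure_mono_null Set.inter_subset_left) h).symm
    _ < ∑ i ∈ s', c * μ (F i) :=
        ENNReal.sum_lt_sum_of_nonempty hs' fun i hi =>
          hA i (Finset.mem_filter.1 hi).1 (Finset.mem_filter.1 hi).2
    _ = c * ∑ i ∈ s, μ (F i) := by
        rw [Finset.mul_sum]
        exact Finset.sum_filter_of_ne fun i _ => right_ne_zero_of_mul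
    _ = c := by rw [hcells, mul_one]

theorem measure_exists_pos_and_lt [Countable ι] {X : Ω → ι → ℝ} (hX : Measurable X)
    (P : Ω → ι → Prop) {S : Finset ι} (hXS : ∀ᵐ ω ∂μ, {i | 0 < X ω i} ⊆ (S : Set ι))
    {c : ENNReal}
    (hcond : ∀ I : Finset ι, I ⊆ S → μ {ω | {i | 0 < X ω i} = (I : Set ι)} ≠ 0 →
      μ {ω | {i | 0 < X ω i} = (I : Set ι) ∧ ∃ i ∈ I, P ω i} <
        c * μ {ω | {i | 0 < X ω i} = (I : Set ι)}) :
    μ {ω | ∃ i, 0 < X ω i ∧ P ω i} < c := by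
  refine measure_lt_of_measure_inter_lt_mul (s := S.powerset)
    (fun I _ => measurableSet_setOf_pos_eq hX I) ?disjoint ?cover fun I hI hne => ?cell
  case disjoint =>
    exact fun I _ J _ hIJ => Set.disjoint_left.2 fun ω hI hJ =>
      hIJ (Finset.coe_injective (hI.symm.trans hJ))
  case cover =>
    filter_upwards [hXS] with ω hω
    refine ⟨S.filter (0 < X ω ·), Finset.mem_powerset.2 (Finset.filter_subset _ _), ?_⟩
    ext i
    simpa using fun hi => hω hi
  case cell =>
    convert hcond I (Finset.mem_powerset.1 hI) hne using 2
    ext ω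
    refine and_congr_right fun hsupp => ?_
    simp only [Set.ext_iff, Set.mem_ofPred_eq, Finset.mem_coe] at hsupp
    simp only [Set.mem_ofPred_eq, hsupp]

theorem measure_pos_of_measure_compl_lt_one {G : Set Ω} (h : μ Gᶜ < 1) : 0 < μ G := by
  refine pos_iff_ne_zero.2 fun hG => h.not_ge ?_
  rw [measure_of_measure_compl_eq_zero (s := Gᶜ) (by rwa [compl_compl]), measure_univ]

end

theorem positive_probability_well_supports_general {n : ℕ}
    {Ω : Type*} [MeasurableSpace Ω] (μ : Measure Ω) [IsProbabilityMeasure μ]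
    (R C : Matrix (Fin n) (Fin n) ℝ)
    (X Y : Ω → Fin n → ℝ) (hXmeas : Measurable X) (hYmeas : Measurable Y)
    (S T : Finset (Fin n))
    (hXS : ∀ᵐ ω ∂μ, {i | 0 < X ω i} ⊆ (S : Set (Fin n)))
    (hYT : ∀ᵐ ω ∂μ, {j | 0 < Y ω j} ⊆ (T : Set (Fin n)))
    (v u : ℝ)
    (hXcond : ∀ I : Finset (Fin n), I ⊆ S →
      μ {ω | {i | 0 < X ω i} = (I : Set (Fin n))} ≠ 0 →
      μ {ω | {i | 0 < X ω i} = (I : Set (Fin n)) ∧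
             ∃ i ∈ I, ∑ j, R i j * Y ω j < v} <
        (1 / 2 : ENNReal) * μ {ω | {i | 0 < X ω i} = (I : Set (Fin n))})
    (hYcond : ∀ J : Finset (Fin n), J ⊆ T →
      μ {ω | {j | 0 < Y ω j} = (J : Set (Fin n))} ≠ 0 →
      μ {ω | {j | 0 < Y ω j} = (J : Set (Fin n)) ∧
             ∃ j ∈ J, ∑ i, X ω i * C i j < u} <
        (1 / 2 : ENNReal) * μ {ω | {j | 0 < Y ω j} = (J : Set (Fin n))}) :
    0 < μ {ω | (∀ i, 0 < X ω i → v ≤ ∑ j, R i j * Y ω j) ∧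
               (∀ j, 0 < Y ω j → u ≤ ∑ i, X ω i * C i j)} ∧
    ∃ x y : Fin n → ℝ, (∃ ω, X ω = x ∧ Y ω = y) ∧
      (∀ i, 0 < x i → v ≤ ∑ j, R i j * y j) ∧
      (∀ j, 0 < y j → u ≤ ∑ i, x i * C i j) := by
  set G := {ω | (∀ i, 0 < X ω i → v ≤ ∑ j, R i j * Y ω j) ∧
    (∀ j, 0 < Y ω j → u ≤ ∑ i, X ω i * C i j)}
  have hXbad := measure_exists_pos_and_lt hXmeas (fun ω i => ∑ j, R i j * Y ω j < v) hXS hXcond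
  have hYbad := measure_exists_pos_and_lt hYmeas (fun ω j => ∑ i, X ω i * C i j < u) hYT hYcond
  have hGc : Gᶜ ⊆ {ω | ∃ i, 0 < X ω i ∧ ∑ j, R i j * Y ω j < v} ∪
      {ω | ∃ j, 0 < Y ω j ∧ ∑ i, X ω i * C i j < u} := by
    intro ω
    simp only [G, Set.mem_compl_iff, Set.mem_ofPred_eq, Set.mem_union, not_and_or,
      not_forall, not_le, exists_prop, imp_self]
  have hGpos : 0 < μ G := measure_pos_of_measure_compl_lt_one <|
    calc μ Gᶜ ≤ _ := (measure_mono hGc).trans (measure_union_le _ _)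
      _ < 1 / 2 + 1 / 2 := ENNReal.add_lt_add hXbad hYbad
      _ = 1 := ENNReal.add_halves 1
  obtain ⟨ω, hω⟩ := nonempty_of_measure_ne_zero hGpos.ne'
  exact ⟨hGpos, X ω, Y ω, ⟨ω, rfl, rfl⟩, hω⟩

/-- if for each possible support I of the random strategy X (inside S)
the conditional probability of some i ∈ I having payoff below v is less than 1/2, and
symmetrically for Y, then with positive probability (X, Y) well supports (v, u); in
particular such a realization exists. -/
theorem positive_probability_well_supports {n : ℕ}
    {Ω : Type*} [MeasurableSpace Ω] (μ : Measure Ω) [IsProbabilityMeasure μ]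
    (R C : Matrix (Fin n) (Fin n) ℝ)
    (hR : ∀ i j, R i j ∈ Set.Icc (0:ℝ) 1) (hC : ∀ i j, C i j ∈ Set.Icc (0:ℝ) 1)
    (X Y : Ω → Fin n → ℝ) (hXmeas : Measurable X) (hYmeas : Measurable Y)
    (hXprob : ∀ᵐ ω ∂μ, (∀ i, 0 ≤ X ω i) ∧ ∑ i, X ω i = 1)
    (hYprob : ∀ᵐ ω ∂μ, (∀ j, 0 ≤ Y ω j) ∧ ∑ j, Y ω j = 1)
    (S T : Finset (Fin n))
    (hXS : ∀ᵐ ω ∂μ, {i | 0 < X ω i} ⊆ (S : Set (Fin n)))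
    (hYT : ∀ᵐ ω ∂μ, {j | 0 < Y ω j} ⊆ (T : Set (Fin n)))
    (v u : ℝ)
    (hXcond : ∀ I : Finset (Fin n), I ⊆ S →
      μ {ω | {i | 0 < X ω i} = (I : Set (Fin n))} ≠ 0 →
      μ {ω | {i | 0 < X ω i} = (I : Set (Fin n)) ∧
             ∃ i ∈ I, ∑ j, R i j * Y ω j < v} <
        (1 / 2 : ENNReal) * μ {ω | {i | 0 < X ω i} = (I : Set (Fin n))})
    (hYcond : ∀ J : Finset (Fin n), J ⊆ T →
      μ {ω | {j | 0 < Y ω j} = (J : Set (Fin n))} ≠ 0 →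
      μ {ω | {j | 0 < Y ω j} = (J : Set (Fin n)) ∧
             ∃ j ∈ J, ∑ i, X ω i * C i j < u} <
        (1 / 2 : ENNReal) * μ {ω | {j | 0 < Y ω j} = (J : Set (Fin n))}) :
    0 < μ {ω | (∀ i, 0 < X ω i → v ≤ ∑ j, R i j * Y ω j) ∧
               (∀ j, 0 < Y ω j → u ≤ ∑ i, X ω i * C i j)} ∧
    ∃ x y : Fin n → ℝ, (∃ ω, X ω = x ∧ Y ω = y) ∧
      (∀ i, 0 < x i → v ≤ ∑ j, R i j * y j) ∧
      (∀ j, 0 < y j → u ≤ ∑ i, x i * C i j) :=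
  positive_probability_well_supports_general μ R C X Y hXmeas hYmeas S T hXS hYT v u hXcond hYcond
end
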